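/- arXiv:math/0003239 — 4 statements merged into one kernel-verified Lean document; each statement's English description precedes it below -/
import Mathlib

section
/- For every prime p, the series ∑_{n≥0} n^5·(n+1)! converges in ℤ_p and its sum equals 26. -/
/-!
`n ^ 5 * (n + 1)!` telescopes: it is `F (n + 1) - F n` for `F n = g n * (n + 1)!`, where the
quartic `g n = n ^ 4 - 5 n ^ 3 + 6 n ^ 2 + 11 n - 26` solves `g (n + 1) * (n + 2) - g n = n ^ 5`.
Since `p ^ k ∣ n!` once `n ≥ p k`, the factorials, hence the `F n`, tend to `0` in `ℤ_[p]`, so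
the series sums to `-F 0 = -g 0 = 26`.
-/

open Filter Topology Nat

theorem NonarchimedeanAddGroup.hasSum_sub_of_tendsto_zero {G : Type*} [AddCommGroup G]
    [UniformSpace G] [IsUniformAddGroup G] [NonarchimedeanAddGroup G] [CompleteSpace G]
    [T2Space G] {f : ℕ → G} (hf : Tendsto f atTop (𝓝 0)) :
    HasSum (fun n ↦ f (n + 1) - f n) (-f 0) := by
  have hdiff : Tendsto (fun n ↦ f (n + 1) - f n) atTop (𝓝 0) := by
    simpa using (hf.comp (tendsto_add_atTop_nat 1)).sub hf
  have hsummable : Summable fun n ↦ f (n + 1) - f n :=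
    summable_of_tendsto_cofinite_zero (by rwa [Nat.cofinite_eq_atTop])
  rw [hsummable.hasSum_iff_tendsto_nat]
  simp only [Finset.sum_range_sub]
  simpa using hf.sub_const (f 0)

namespace PadicInt

variable {p : ℕ} [Fact p.Prime]

theorem tendsto_zero_of_forall_pow_dvd {ι : Type*} {l : Filter ι} {x : ι → ℤ_[p]}
    (h : ∀ k : ℕ, ∀ᶠ i in l, (p : ℤ_[p]) ^ k ∣ x i) : Tendsto x l (𝓝 0) := by
  rw [NormedAddGroup.tendsto_nhds_zero]
  intro ε hε
  obtain ⟨k, hk⟩ := exists_pow_neg_lt p hε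
  filter_upwards [h k] with i hi
  exact ((norm_le_pow_iff_mem_span_pow _ k).2 (Ideal.mem_span_singleton.2 hi)).trans_lt hk

theorem tendsto_natCast_factorial : Tendsto (fun n ↦ (n ! : ℤ_[p])) atTop (𝓝 0) := by
  refine tendsto_zero_of_forall_pow_dvd fun k ↦ ?_
  filter_upwards [eventually_ge_atTop (p * k)] with n hn
  have hval : k ≤ padicValNat p (p * k)! := by rw [padicValNat_factorial_mul]; omega
  have hdvd : p ^ k ∣ n ! :=
    (pow_dvd_pow p hval).trans <| pow_padicValNat_dvd.trans <| Nat.factorial_dvd_factorial hn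
  simpa using Nat.cast_dvd_cast (α := ℤ_[p]) hdvd

end PadicInt

def fifthPowFactorialAntidiff (R : Type*) [CommRing R] (n : ℕ) : R :=
  ((n : R) ^ 4 - 5 * n ^ 3 + 6 * n ^ 2 + 11 * n - 26) * (n + 1)!

section fifthPowFactorialAntidiff

variable (R : Type*) [CommRing R]

theorem fifthPowFactorialAntidiff_succ_sub (n : ℕ) :
    fifthPowFactorialAntidiff R (n + 1) - fifthPowFactorialAntidiff R n =
      ((n ^ 5 * (n + 1)! : ℕ) : R) := by
  simp only [fifthPowFactorialAntidiff, Nat.factorial_succ (n + 1)]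
  push_cast
  ring

theorem fifthPowFactorialAntidiff_zero : fifthPowFactorialAntidiff R 0 = -26 := by
  simp [fifthPowFactorialAntidiff]

end fifthPowFactorialAntidiff

theorem PadicInt.tendsto_fifthPowFactorialAntidiff (p : ℕ) [Fact p.Prime] :
    Tendsto (fifthPowFactorialAntidiff ℤ_[p]) atTop (𝓝 0) :=
  isBoundedUnder_le_mul_tendsto_zero ⟨1, eventually_map.2 (.of_forall fun _ ↦ norm_le_one _)⟩
    (tendsto_natCast_factorial.comp (tendsto_add_atTop_nat 1))

/-- For every prime `p`, the series `∑ n^5·(n+1)!` converges in `ℤ_p` with sum `26`. -/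
theorem series_n_pow_five_mul_factorial_eq_26 (p : ℕ) [Fact p.Prime] :
    HasSum (fun n : ℕ => ((n ^ 5 * (n + 1).factorial : ℕ) : ℤ_[p])) 26 := by
  have h := NonarchimedeanAddGroup.hasSum_sub_of_tendsto_zero
    (PadicInt.tendsto_fifthPowFactorialAntidiff p)
  rw [fifthPowFactorialAntidiff_zero, neg_neg] at h
  simpa only [fifthPowFactorialAntidiff_succ_sub] using h
end

section
/- If F = (z-1)G holds for formal power series and f, g are the Borel-associated series (f = ∑ a_n z^n when F = ∑ a_n z^n/n!, similarly g), then f = (z²·(d/dz) + z - 1)·g. -/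
/-!
Coefficientwise, the Borel map `∑ cₙ zⁿ / n! ↦ ∑ cₙ zⁿ` sends multiplication by `z` to
`p ↦ z · (z p)'`, since `(n+1)! cₙ = (n+1) · n! cₙ`. Applying this to `F = zG - G` and using
linearity gives `f = z (z g)' - g = z² g' + (z - 1) g`.
-/

open PowerSeries Nat

namespace PowerSeries

variable (R : Type*) [CommSemiring R]

noncomputable def borel : R⟦X⟧ →ₗ[R] R⟦X⟧ where
  toFun p := mk fun n => n ! * coeff n p
  map_add' p q := by ext n; simp [mul_add]
  map_smul' c p := by ext n; simp [mul_left_comm]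

variable {R}

@[simp]
theorem coeff_borel (p : R⟦X⟧) (n : ℕ) : coeff n (borel R p) = n ! * coeff n p := by
  simp [borel]

theorem borel_X_mul (p : R⟦X⟧) : borel R (X * p) = X * d⁄dX R (X * borel R p) := by
  ext (_ | n)
  · simp
  · simp only [coeff_succ_X_mul, coeff_derivative, coeff_borel, factorial_succ]
    push_cast
    ring

theorem borel_eq_of_coeff_eq_div_factorial {K : Type*} [Field K] [CharZero K] {a : ℕ → K}
    {p q : K⟦X⟧} (hp : ∀ n, coeff n p = a n / n !) (hq : ∀ n, coeff n q = a n) :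
    borel K p = q := by
  ext n
  rw [coeff_borel, hp, hq, mul_div_cancel₀ _ (cast_ne_zero.2 (factorial_ne_zero n))]

end PowerSeries

/-- If `F = (z-1)G` and `f, g` are the Borel-associated series of `F, G`, then
`f = z²·g' + (z-1)·g`. -/
theorem borel_of_div_by_z_sub_one {K : Type*} [Field K] [CharZero K]
    (a b : ℕ → K) (F G f g : PowerSeries K)
    (hF : ∀ n, PowerSeries.coeff n F = a n / n.factorial)
    (hG : ∀ n, PowerSeries.coeff n G = b n / n.factorial)
    (hf : ∀ n, PowerSeries.coeff n f = a n)
    (hg : ∀ n, PowerSeries.coeff n g = b n)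
    (h : F = (PowerSeries.X - 1) * G) :
    f = PowerSeries.X ^ 2 * PowerSeries.derivative K g + (PowerSeries.X - 1) * g := by
  rw [← borel_eq_of_coeff_eq_div_factorial hF hf, ← borel_eq_of_coeff_eq_div_factorial hG hg, h,
    sub_mul, one_mul, map_sub, borel_X_mul, Derivation.leibniz, derivative_X, smul_eq_mul,
    smul_eq_mul]
  ring
end

section
/- Let q be an element of a field with q ≠ 0 and q not a root of unity, and define δ_q f(z) = (f(qz) - f(z))/((q-1)z) on formal power series. Then for α ≠ 0, ((1/q)·δ_{q^{-1}})^n applied to 1/(z-α) equals (-1)^n n_q! / ((z-α)(z-αq)···(z-αq^n)), where n_q! = ∏_{m=1}^n (1-q^m)/(1-q). -/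
/-!
Write `P_m(z) = ∏_{j<m} (z - α qʲ)`. Substituting `z ↦ q⁻¹ z` shifts the roots by one step,
so `P_{m+1}(z) = P_m(z) (z - α qᵐ) = (z - α) qᵐ P_m(q⁻¹ z)`. Hence in
`1 / P_m(q⁻¹ z) - 1 / P_m(z)` the terms in `α` cancel and the difference is
`(qᵐ - 1) z / P_{m+1}(z)`: one application of `q⁻¹ δ_{q⁻¹}` to `c / P_m` gives
`-c m_q / P_{m+1}`, which is the induction step.
-/

open Finset

section

variable {K : Type*} [Field K]

/-- Jackson's `q`-derivative `δ_q`. -/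
def qDeriv (q : K) (g : K → K) (w : K) : K :=
  (g (q * w) - g w) / ((q - 1) * w)

def qShiftedProd (α q : K) (m : ℕ) (z : K) : K :=
  ∏ j ∈ range m, (z - α * q ^ j)

namespace qShiftedProd

variable {α q : K}

theorem succ (m : ℕ) (z : K) :
    qShiftedProd α q (m + 1) z = qShiftedProd α q m z * (z - α * q ^ m) :=
  prod_range_succ _ _

theorem succ_eq_inv_mul (hq : q ≠ 0) (m : ℕ) (z : K) :
    qShiftedProd α q (m + 1) z = (z - α) * (q ^ m * qShiftedProd α q m (q⁻¹ * z)) := by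
  have hshift : q ^ m * qShiftedProd α q m (q⁻¹ * z) = ∏ j ∈ range m, (z - α * q ^ (j + 1)) := by
    rw [qShiftedProd, ← card_range m, ← prod_const, card_range, ← prod_mul_distrib]
    refine prod_congr rfl fun j _ => ?_
    field_simp
    ring
  rw [hshift, qShiftedProd, prod_range_succ', pow_zero, mul_one, mul_comm]

theorem ne_zero {m : ℕ} {z : K} (h : ∀ j < m, z ≠ α * q ^ j) : qShiftedProd α q m z ≠ 0 :=
  prod_ne_zero_iff.mpr fun j hj => sub_ne_zero.mpr (h j (mem_range.mp hj))

theorem div_inv_mul_sub_div (hq : q ≠ 0) {m : ℕ} {z : K} (hP : qShiftedProd α q (m + 1) z ≠ 0)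
    (c : K) :
    c / qShiftedProd α q m (q⁻¹ * z) - c / qShiftedProd α q m z
      = c * (q ^ m - 1) * z / qShiftedProd α q (m + 1) z := by
  have hfall := succ (α := α) (q := q) m z
  have hrise := succ_eq_inv_mul (α := α) hq m z
  have hA : qShiftedProd α q m z ≠ 0 := left_ne_zero_of_mul (hfall ▸ hP)
  have hB : qShiftedProd α q m (q⁻¹ * z) ≠ 0 :=
    right_ne_zero_of_mul (right_ne_zero_of_mul (hrise ▸ hP))
  rw [div_sub_div _ _ hB hA, div_eq_div_iff (mul_ne_zero hB hA) hP]
  linear_combination c * qShiftedProd α q m z * hrise - c * qShiftedProd α q m (q⁻¹ * z) * hfall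

end qShiftedProd

end

theorem q_difference_iterate_simple_fraction_general {K : Type*} [Field K]
    (q α : K) (hq0 : q ≠ 0) (hq : ∀ m : ℕ, 1 ≤ m → q ^ m ≠ 1)
    (n : ℕ) (z : K) (hz : z ≠ 0) (hzn : ∀ j ≤ n, z ≠ α * q ^ j) :
    ((fun g : K → K => fun w => q⁻¹ * ((g (q⁻¹ * w) - g w) / ((q⁻¹ - 1) * w)))^[n]
        (fun w => 1 / (w - α))) z
      = (-1) ^ n * (∏ m ∈ Finset.range n, ((1 - q ^ (m + 1)) / (1 - q))) /
          ∏ j ∈ Finset.range (n + 1), (z - α * q ^ j) := by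
  have hq1 : q ≠ 1 := by simpa using hq 1 le_rfl
  change (fun g w => q⁻¹ * qDeriv q⁻¹ g w)^[n] _ z = _ / qShiftedProd α q (n + 1) z
  induction n generalizing z with
  | zero => simp [qShiftedProd]
  | succ n ih =>
    have hzn' : ∀ j ≤ n, q⁻¹ * z ≠ α * q ^ j := fun j hj h => hzn (j + 1) (by omega) <| by
      rw [pow_succ, ← mul_assoc, ← h]
      field_simp
    have hP : qShiftedProd α q (n + 2) z ≠ 0 :=
      qShiftedProd.ne_zero fun j hj => hzn j (by omega)
    rw [Function.iterate_succ_apply', qDeriv, ih (q⁻¹ * z) (mul_ne_zero (inv_ne_zero hq0) hz) hzn',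
      ih z hz fun j hj => hzn j (by omega), qShiftedProd.div_inv_mul_sub_div hq0 hP,
      prod_range_succ]
    have h1q : (1 : K) - q ≠ 0 := sub_ne_zero.mpr hq1.symm
    field_simp
    ring

/-- Iterates of the `q`-difference operator `(1/q)·δ_{q⁻¹}` on the simple fraction
`1/(z-α)`: `((1/q)·δ_{q⁻¹})ⁿ (1/(z-α)) = (-1)ⁿ n_q! / ((z-α)(z-αq)⋯(z-αqⁿ))`. -/
theorem q_difference_iterate_simple_fraction {K : Type*} [Field K] [CharZero K]
    (q α : K) (hq0 : q ≠ 0) (hq : ∀ m : ℕ, 1 ≤ m → q ^ m ≠ 1) (hα : α ≠ 0)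
    (n : ℕ) (z : K) (hz : z ≠ 0) (hzn : ∀ j ≤ n, z ≠ α * q ^ j) :
    ((fun g : K → K => fun w => q⁻¹ * ((g (q⁻¹ * w) - g w) / ((q⁻¹ - 1) * w)))^[n]
        (fun w => 1 / (w - α))) z
      = (-1) ^ n * (∏ m ∈ Finset.range n, ((1 - q ^ (m + 1)) / (1 - q))) /
          ∏ j ∈ Finset.range (n + 1), (z - α * q ^ j) :=
  q_difference_iterate_simple_fraction_general q α hq0 hq n z hz hzn
end

section
/- The q-exponential E_q(z) = ∑_{n≥0} z^n/(n_q!) satisfies the infinite product expansion E_q(z) = ∏_{m=1}^∞ (1 + (q-1)z/q^m) for complex q with |q| > 1, and in particular its zeros are exactly z = q^m/(1-q) for integers m > 0. -/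
/-!
The function `E_q(z) = ∑ zⁿ/n_q!` is an entire power series (the ratio of consecutive
coefficients is `(1 - q)/(1 - q^{n+1}) → 0`), and comparing coefficients gives the functional
equation `E_q(qz) = (1 + (q - 1)z) E_q(z)`. Iterating it `M` times gives
`E_q(z) = ∏_{m<M} (1 + (q - 1)z/q^{m+1}) · E_q(z/q^M)`, and the last factor tends to
`E_q(0) = 1`. The factors are `1 + O(|q|^{-m})`, so the infinite product converges absolutely
and vanishes exactly when one of its factors does.
-/

open Filter Topology FormalMultilinearSeries

lemma tprod_one_add_eq_zero_iff_of_summable {ι R : Type*} [NormedCommRing R] [NormOneClass R]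
    [CompleteSpace R] [NormMulClass R] {f : ι → R} (hf : Summable (‖f ·‖)) :
    ∏' i, (1 + f i) = 0 ↔ ∃ i, 1 + f i = 0 := by
  refine ⟨fun h => ?_, tprod_of_exists_eq_zero⟩
  by_contra! hne
  exact tprod_one_add_ne_zero_of_summable hne hf h

lemma one_add_sub_one_mul_div_pow_eq_zero_iff {K : Type*} [Field K] {q : K} (hq₀ : q ≠ 0)
    (hq₁ : q ≠ 1) (z : K) (n : ℕ) :
    1 + (q - 1) * z / q ^ n = 0 ↔ z = q ^ n / (1 - q) := by
  have hq₁' : 1 - q ≠ 0 := sub_ne_zero.2 hq₁.symm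
  have hqn : q ^ n ≠ 0 := pow_ne_zero n hq₀
  constructor <;> intro h
  · field_simp at h ⊢
    linear_combination -h
  · rw [h]
    field_simp
    ring

noncomputable def qFactorial (q : ℂ) (n : ℕ) : ℂ :=
  ∏ k ∈ Finset.range n, ((1 - q ^ (k + 1)) / (1 - q))

noncomputable def qExp (q z : ℂ) : ℂ :=
  ∑' n : ℕ, z ^ n / qFactorial q n

noncomputable def qExpSeries (q : ℂ) : FormalMultilinearSeries ℂ ℂ ℂ :=
  ofScalars ℂ fun n => (qFactorial q n)⁻¹

lemma qFactorial_succ (q : ℂ) (n : ℕ) :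
    qFactorial q (n + 1) = qFactorial q n * ((1 - q ^ (n + 1)) / (1 - q)) :=
  Finset.prod_range_succ _ n

section

variable {q : ℂ} (hq : 1 < ‖q‖)
include hq

lemma one_sub_pow_ne_zero_of_one_lt_norm {n : ℕ} (hn : n ≠ 0) : 1 - q ^ n ≠ 0 := by
  intro h
  have : ‖q ^ n‖ = 1 := by rw [← sub_eq_zero.1 h, norm_one]
  exact (one_lt_pow₀ hq hn).ne' (by rwa [norm_pow] at this)

lemma qFactorial_ne_zero (n : ℕ) : qFactorial q n ≠ 0 := by
  refine Finset.prod_ne_zero_iff.2 fun k _ => div_ne_zero ?_ ?_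
  · exact one_sub_pow_ne_zero_of_one_lt_norm hq k.succ_ne_zero
  · simpa using one_sub_pow_ne_zero_of_one_lt_norm hq one_ne_zero

lemma tendsto_norm_one_sub_pow_atTop : Tendsto (fun n : ℕ => ‖1 - q ^ n‖) atTop atTop := by
  refine tendsto_atTop_mono (fun n => ?_)
    (tendsto_atTop_add_const_right _ (-1) (tendsto_pow_atTop_atTop_of_one_lt hq))
  have h := norm_sub_norm_le (q ^ n) 1
  rw [norm_sub_rev, norm_pow, norm_one] at h
  linarith

lemma qExpSeries_radius : (qExpSeries q).radius = ⊤ := by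
  refine ofScalars_radius_eq_top_of_tendsto _ _
    (Eventually.of_forall fun n => inv_ne_zero (qFactorial_ne_zero hq n)) ?_
  have hratio : ∀ n : ℕ, ‖(qFactorial q n.succ)⁻¹‖ / ‖(qFactorial q n)⁻¹‖
      = ‖1 - q‖ / ‖1 - q ^ (n + 1)‖ := fun n => by
    have := norm_ne_zero_iff.2 (qFactorial_ne_zero hq n)
    rw [qFactorial_succ, norm_inv, norm_inv, norm_mul, norm_div]
    field_simp
  simp_rw [hratio]
  exact tendsto_const_nhds.div_atTop
    ((tendsto_norm_one_sub_pow_atTop hq).comp (tendsto_add_atTop_nat 1))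

lemma hasFPowerSeriesOnBall_qExp : HasFPowerSeriesOnBall (qExp q) (qExpSeries q) 0 ⊤ := by
  have h := (qExpSeries q).hasFPowerSeriesOnBall (by simp [qExpSeries_radius hq])
  rw [qExpSeries_radius hq] at h
  convert h using 1
  funext z
  simp [qExp, qExpSeries, FormalMultilinearSeries.sum, div_eq_mul_inv]

lemma hasSum_qExp (z : ℂ) : HasSum (fun n => z ^ n / qFactorial q n) (qExp q z) := by
  have h := (hasFPowerSeriesOnBall_qExp hq).hasSum (y := z) (by simp)
  simpa [qExpSeries, ofScalars_apply_eq, div_eq_mul_inv, mul_comm] using h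

lemma qExp_mul_left (z : ℂ) : qExp q (q * z) = (1 + (q - 1) * z) * qExp q z := by
  have hterm : ∀ n : ℕ, (q * z) ^ (n + 1) / qFactorial q (n + 1) - z ^ (n + 1) / qFactorial q (n + 1)
      = (q - 1) * z * (z ^ n / qFactorial q n) := fun n => by
    have hfac := qFactorial_ne_zero hq n
    have hnum := one_sub_pow_ne_zero_of_one_lt_norm hq n.succ_ne_zero
    have hden : 1 - q ≠ 0 := by simpa using one_sub_pow_ne_zero_of_one_lt_norm hq one_ne_zero
    rw [qFactorial_succ]
    field_simp
    ring
  have hdiff := (hasSum_qExp hq (q * z)).sub (hasSum_qExp hq z)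
  have key : qExp q (q * z) - qExp q z = (q - 1) * z * qExp q z := by
    rw [← hdiff.tsum_eq, hdiff.summable.tsum_eq_zero_add, tsum_congr hterm, tsum_mul_left]
    simp [qExp]
  linear_combination key

lemma qExp_eq_prod_mul_qExp_div_pow (z : ℂ) (M : ℕ) :
    qExp q z = (∏ m ∈ Finset.range M, (1 + (q - 1) * z / q ^ (m + 1))) * qExp q (z / q ^ M) := by
  induction M with
  | zero => simp
  | succ M ih =>
    have hq₀ : q ≠ 0 := norm_pos_iff.1 (one_pos.trans hq)
    have hshift : q * (z / q ^ (M + 1)) = z / q ^ M := by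
      field_simp
      ring
    rw [ih, Finset.prod_range_succ, ← hshift, qExp_mul_left hq, mul_div_assoc]
    ring

lemma tendsto_qExp_div_pow (z : ℂ) : Tendsto (fun M : ℕ => qExp q (z / q ^ M)) atTop (𝓝 1) := by
  have hcont := (hasFPowerSeriesOnBall_qExp hq).hasFPowerSeriesAt.continuousAt
  have hzero : qExp q 0 = 1 := by
    simpa [qExpSeries, ofScalars_apply_eq, qFactorial] using
      ((hasFPowerSeriesOnBall_qExp hq).coeff_zero (fun _ => 0)).symm
  have hsmall : Tendsto (fun M : ℕ => z / q ^ M) atTop (𝓝 0) := by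
    simpa [div_eq_mul_inv] using (tendsto_pow_atTop_nhds_zero_of_norm_lt_one
      (by simpa using inv_lt_one_of_one_lt₀ hq : ‖q⁻¹‖ < 1)).const_mul z
  have := hcont.tendsto.comp hsmall
  rwa [hzero] at this

lemma summable_norm_div_pow_succ (c : ℂ) : Summable fun m : ℕ => ‖c / q ^ (m + 1)‖ := by
  refine ((summable_geometric_of_lt_one (inv_nonneg.2 (norm_nonneg q))
    (inv_lt_one_of_one_lt₀ hq)).mul_left (‖c‖ / ‖q‖)).congr fun m => ?_
  rw [norm_div, norm_pow, pow_succ, inv_pow]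
  field_simp

lemma hasProd_qExp (z : ℂ) :
    HasProd (fun m : ℕ => 1 + (q - 1) * z / q ^ (m + 1)) (qExp q z) := by
  have hmul := multipliable_one_add_of_summable (summable_norm_div_pow_succ hq ((q - 1) * z))
  have hlim := hmul.hasProd.tendsto_prod_nat.mul (tendsto_qExp_div_pow hq z)
  simp_rw [← qExp_eq_prod_mul_qExp_div_pow hq z, mul_one] at hlim
  rw [tendsto_const_nhds_iff.1 hlim]
  exact hmul.hasProd

end

/-- For `|q| > 1`, the `q`-exponential `E_q(z) = ∑ zⁿ/n_q!` equals the infinite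
product `∏_{m≥1} (1 + (q-1)z/q^m)`, and its zeros are exactly `z = q^m/(1-q)`,
`m ≥ 1`. -/
theorem q_exponential_product_expansion (q : ℂ) (hq : 1 < ‖q‖) (z : ℂ) :
    (∑' n : ℕ, z ^ n / ∏ k ∈ Finset.range n, ((1 - q ^ (k + 1)) / (1 - q)))
        = ∏' m : ℕ, (1 + (q - 1) * z / q ^ (m + 1)) ∧
      ((∑' n : ℕ, z ^ n / ∏ k ∈ Finset.range n, ((1 - q ^ (k + 1)) / (1 - q))) = 0 ↔
        ∃ m : ℕ, z = q ^ (m + 1) / (1 - q)) := by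
  change qExp q z = _ ∧ (qExp q z = 0 ↔ _)
  have hq₀ : q ≠ 0 := norm_pos_iff.1 (one_pos.trans hq)
  have hq₁ : q ≠ 1 := by rintro rfl; simp at hq
  rw [← (hasProd_qExp hq z).tprod_eq,
    tprod_one_add_eq_zero_iff_of_summable (summable_norm_div_pow_succ hq ((q - 1) * z))]
  exact ⟨rfl, exists_congr fun m => one_add_sub_one_mul_div_pow_eq_zero_iff hq₀ hq₁ z (m + 1)⟩
end
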